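/- Let S be a *-semigroup and a, b ∈ S with a b = b a and a b* = b* a. If both a and b are *-DMP, then a b is *-DMP. -/
import Mathlib


variable {S : Type*}

/-- `spow a m` is `a^m` for `m ≥ 1` in a semigroup (junk value `a` at `m = 0`). -/
def spow [Semigroup S] (a : S) : ℕ → S
  | 0 => a
  | 1 => a
  | (n + 2) => spow a (n + 1) * a

/-- `x` is a `{1,3}`-inverse of `a`. -/
def Is13Inv [Semigroup S] [StarMul S] (a x : S) : Prop :=
  a * x * a = a ∧ star (a * x) = a * x

/-- `x` is the Moore–Penrose inverse of `a`. -/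
def IsMPInv [Semigroup S] [StarMul S] (a x : S) : Prop :=
  a * x * a = a ∧ x * a * x = x ∧ star (a * x) = a * x ∧ star (x * a) = x * a

/-- `x` is the group inverse of `a`. -/
def IsGroupInv [Semigroup S] (a x : S) : Prop :=
  a * x * a = a ∧ x * a * x = x ∧ a * x = x * a

/-- `a` is EP: the group inverse and Moore–Penrose inverse of `a` exist and coincide. -/
def IsEP [Semigroup S] [StarMul S] (a : S) : Prop :=
  ∃ x, IsGroupInv a x ∧ IsMPInv a x

/-- `a` is *-DMP with index `m`: `m` is the smallest positive integer with `a^m` EP. -/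
def IsStarDMPWithIndex [Semigroup S] [StarMul S] (a : S) (m : ℕ) : Prop :=
  0 < m ∧ IsEP (spow a m) ∧ ∀ k, 0 < k → IsEP (spow a k) → m ≤ k

/-- The defining equations of a Drazin inverse `x` of `a` relative to the exponent `m`. -/
def DrazinEqs [Semigroup S] (a x : S) (m : ℕ) : Prop :=
  spow a m * x * a = spow a m ∧ x * a * x = x ∧ a * x = x * a

/-- `x` is the Drazin inverse of `a` with (minimal) index `m`. -/
def IsDrazinWithIndex [Semigroup S] (a x : S) (m : ℕ) : Prop :=
  0 < m ∧ DrazinEqs a x m ∧ ∀ k, 0 < k → (∃ y, DrazinEqs a y k) → m ≤ k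

/-- The defining equations of a pseudo core inverse `x` of `a` relative to the exponent `m`. -/
def PCoreEqs [Semigroup S] [StarMul S] (a x : S) (m : ℕ) : Prop :=
  x * spow a (m + 1) = spow a m ∧ a * (x * x) = x ∧ star (a * x) = a * x

/-- `x` is the pseudo core inverse of `a` with (minimal) index `m`. -/
def IsPCoreWithIndex [Semigroup S] [StarMul S] (a x : S) (m : ℕ) : Prop :=
  0 < m ∧ PCoreEqs a x m ∧ ∀ k y, 0 < k → PCoreEqs a y k → m ≤ k

/-- The defining equations of a dual pseudo core inverse `x` of `a` relative to exponent `m`. -/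
def DPCoreEqs [Semigroup S] [StarMul S] (a x : S) (m : ℕ) : Prop :=
  spow a (m + 1) * x = spow a m ∧ x * x * a = x ∧ star (x * a) = x * a

/-- `x` is the dual pseudo core inverse of `a` with (minimal) index `m`. -/
def IsDPCoreWithIndex [Semigroup S] [StarMul S] (a x : S) (m : ℕ) : Prop :=
  0 < m ∧ DPCoreEqs a x m ∧ ∀ k y, 0 < k → DPCoreEqs a y k → m ≤ k

/-- `a` is *-DMP: some positive power of `a` is EP. -/
def IsStarDMP [Semigroup S] [StarMul S] (a : S) : Prop :=
  ∃ m, 0 < m ∧ IsEP (spow a m)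


section AuxLemmas
variable [Semigroup S]

lemma spow_succ' (a : S) : ∀ n, 0 < n → spow a (n + 1) = spow a n * a
  | 1, _ => rfl
  | (_ + 2), _ => rfl

lemma spow_comm (a c : S) (h : a * c = c * a) : ∀ n, spow a n * c = c * spow a n
  | 0 => h
  | 1 => h
  | (n + 2) => by
    have ih := spow_comm a c h (n + 1)
    show spow a (n + 1) * a * c = c * (spow a (n + 1) * a)
    rw [mul_assoc, h, ← mul_assoc, ih, mul_assoc]

lemma spow_add (a : S) (m : ℕ) (hm : 0 < m) : ∀ n, 0 < n → spow a (m + n) = spow a m * spow a n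
  | 1, _ => by rw [spow_succ' a m hm]; rfl
  | (n + 2), _ => by
    have ih := spow_add a m hm (n + 1) n.succ_pos
    have h' : m + (n + 2) = (m + (n + 1)) + 1 := by omega
    rw [h', spow_succ' a (m + (n + 1)) (by omega), ih, mul_assoc]
    rfl

lemma spow_mul (a : S) (m : ℕ) (hm : 0 < m) : ∀ n, 0 < n → spow a (m * n) = spow (spow a m) n
  | 1, _ => by rw [Nat.mul_one]; rfl
  | (n + 2), _ => by
    have ih := spow_mul a m hm (n + 1) n.succ_pos
    have h' : m * (n + 2) = m * (n + 1) + m := by ring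
    rw [h', spow_add a (m * (n + 1)) (by positivity) m hm, ih]
    rfl

lemma mul_spow {a b : S} (h : a * b = b * a) : ∀ n, spow (a * b) n = spow a n * spow b n
  | 0 => rfl
  | 1 => rfl
  | (n + 2) => by
    have ih := mul_spow h (n + 1)
    show spow (a * b) (n + 1) * (a * b) = spow a (n + 1) * a * (spow b (n + 1) * b)
    have hba : spow b (n + 1) * a = a * spow b (n + 1) := spow_comm b a h.symm (n + 1)
    rw [ih, mul_assoc, ← mul_assoc (spow b (n + 1)) a b, hba,
      mul_assoc a (spow b (n + 1)) b, ← mul_assoc, ← mul_assoc]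

lemma idem_absorb {f u : S} (hfu : f * u = u) : ∀ n, 0 < n → f * spow u n = spow u n
  | 1, _ => hfu
  | (n + 2), _ => by
    show f * (spow u (n + 1) * u) = spow u (n + 1) * u
    rw [← mul_assoc, idem_absorb hfu (n + 1) n.succ_pos]

lemma spow_idem {f : S} (hf : f * f = f) : ∀ n, 0 < n → spow f n = f
  | 1, _ => rfl
  | (n + 2), _ => by
    show spow f (n + 1) * f = f
    rw [spow_idem hf (n + 1) n.succ_pos, hf]

/-- Bicommutant property: anything commuting with `u` commutes with its group inverse. -/
lemma groupInv_comm {u x c : S} (hg1 : u * x * u = u) (hg2 : x * u * x = x)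
    (hg3 : u * x = x * u) (hc : c * u = u * c) : c * x = x * c := by
  have A1 : u * x * c = x * c * u := by
    rw [hg3, mul_assoc, ← hc, ← mul_assoc]
  have e1 : u * (u * x) = u := by rw [hg3, ← mul_assoc, hg1]
  have A2 : u * u * x = u := by rw [mul_assoc]; exact e1
  have A3 : u * x * c * u * x = u * x * c := by
    rw [A1, mul_assoc (x * c) u u, mul_assoc (x * c) (u * u) x, A2, ← A1]
  have A4 : u * x * c * u * x = c * (u * x) := by
    rw [mul_assoc (u * x) c u, hc, ← mul_assoc (u * x) u c, hg1, ← hc, mul_assoc]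
  have Acomm : u * x * c = c * (u * x) := A3.symm.trans A4
  have exf : x * (u * x) = x := by rw [← mul_assoc, hg2]
  have efx : u * x * x = x := by rw [hg3]; exact hg2
  calc c * x = c * (u * x * x) := by rw [efx]
    _ = c * (u * x) * x := by rw [← mul_assoc c (u * x) x]
    _ = u * x * c * x := by rw [← Acomm]
    _ = x * c * u * x := by rw [A1]
    _ = x * (c * (u * x)) := by rw [mul_assoc (x * c) u x, mul_assoc x c (u * x)]
    _ = x * (u * x * c) := by rw [← Acomm]
    _ = x * (u * x) * c := by rw [← mul_assoc x (u * x) c]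
    _ = x * c := by rw [exf]

lemma comm_mul {s x y : S} (hx : s * x = x * s) (hy : s * y = y * s) :
    s * (x * y) = (x * y) * s := by
  rw [← mul_assoc, hx, mul_assoc, hy, ← mul_assoc]

lemma middle_comm {x y z w : S} (h : y * z = z * y) :
    (x * y) * (z * w) = (x * z) * (y * w) := by
  rw [mul_assoc, ← mul_assoc y z w, h, mul_assoc z y w, ← mul_assoc]

variable [StarMul S]

lemma isEP_spow {u : S} (h : IsEP u) (n : ℕ) (hn : 0 < n) : IsEP (spow u n) := by
  obtain ⟨x, ⟨g1, g2, g3⟩, _, _, m3, m4⟩ := h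
  have hff : (u * x) * (u * x) = u * x := by rw [← mul_assoc (u * x) u x, g1]
  have hUX : spow u n * spow x n = u * x := (mul_spow g3 n).symm.trans (spow_idem hff n hn)
  have hXU : spow x n * spow u n = u * x := by
    calc spow x n * spow u n = spow (x * u) n := (mul_spow g3.symm n).symm
      _ = spow (u * x) n := by rw [← g3]
      _ = u * x := spow_idem hff n hn
  have fU : (u * x) * spow u n = spow u n := idem_absorb g1 n hn
  have fX : (u * x) * spow x n = spow x n :=
    idem_absorb (show (u * x) * x = x by rw [g3]; exact g2) n hn
  refine ⟨spow x n, ⟨?_, ?_, ?_⟩, ?_, ?_, ?_, ?_⟩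
  · rw [hUX, fU]
  · rw [hXU, fX]
  · rw [hUX, hXU]
  · rw [hUX, fU]
  · rw [hXU, fX]
  · rw [hUX]; exact m3
  · rw [hXU]; exact m3

lemma isEP_mul {u v : S} (hu : IsEP u) (hv : IsEP v) (huv : u * v = v * u) :
    IsEP (u * v) := by
  obtain ⟨p, ⟨pg1, pg2, pg3⟩, _, _, pm3, pm4⟩ := hu
  obtain ⟨q, ⟨qg1, qg2, qg3⟩, _, _, qm3, qm4⟩ := hv
  have c1 : v * p = p * v := groupInv_comm pg1 pg2 pg3 huv.symm
  have c2 : u * q = q * u := groupInv_comm qg1 qg2 qg3 huv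
  have c3 : p * q = q * p := groupInv_comm qg1 qg2 qg3 c1.symm
  have hvq_u : u * (v * q) = (v * q) * u := comm_mul huv c2
  have hvq_p : p * (v * q) = (v * q) * p := comm_mul c1.symm c3
  have hqv_p : p * (q * v) = (q * v) * p := comm_mul c3 c1.symm
  have r1 : (u * v) * (p * q) = (u * p) * (v * q) := middle_comm c1
  have r2 : (p * q) * (u * v) = (p * u) * (q * v) := middle_comm c2.symm
  have G1 : (u * v) * (p * q) * (u * v) = u * v := by
    rw [r1, middle_comm hvq_u.symm, pg1, qg1]
  have G2 : (p * q) * (u * v) * (p * q) = p * q := by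
    rw [r2, middle_comm hqv_p.symm, pg2, qg2]
  have G3 : (u * v) * (p * q) = (p * q) * (u * v) := by
    rw [r1, r2, pg3, qg3]
  refine ⟨p * q, ⟨G1, G2, G3⟩, G1, G2, ?_, ?_⟩
  · rw [r1, star_mul, qm3, pm3]; exact comm_mul hvq_u.symm hvq_p.symm
  · rw [G3.symm, r1, star_mul, qm3, pm3]; exact comm_mul hvq_u.symm hvq_p.symm

end AuxLemmas

/-- Theorem 2.15: if `a b = b a`, `a b* = b* a` and both `a` and `b` are *-DMP,
then `a b` is *-DMP. -/
theorem stmt_9 [Semigroup S] [StarMul S] (a b : S)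
    (h1 : a * b = b * a) (h2 : a * star b = star b * a)
    (ha : IsStarDMP a) (hb : IsStarDMP b) :
    IsStarDMP (a * b) := by
  obtain ⟨m, hm, hEPa⟩ := ha
  obtain ⟨n, hn, hEPb⟩ := hb
  refine ⟨m * n, Nat.mul_pos hm hn, ?_⟩
  have hA : IsEP (spow a (m * n)) := by
    rw [spow_mul a m hm n hn]; exact isEP_spow hEPa n hn
  have hB : IsEP (spow b (m * n)) := by
    rw [Nat.mul_comm, spow_mul b n hn m hm]; exact isEP_spow hEPb m hm
  have hcomm : spow a (m * n) * spow b (m * n) = spow b (m * n) * spow a (m * n) := by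
    have h' : a * spow b (m * n) = spow b (m * n) * a :=
      (spow_comm b a h1.symm (m * n)).symm
    exact spow_comm a (spow b (m * n)) h' (m * n)
  rw [mul_spow h1 (m * n)]
  exact isEP_mul hA hB hcomm
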